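/- Let φ be an anisotropic quadratic form over K representing 1, and f ∈ K[X] an irreducible monic polynomial in one variable. Then φ becomes isotropic over K(f) = K[X]/(f) if and only if f can be written as a product of at most deg(f) values represented by φ over K(X). -/

import Mathlib

/-!
A value of `φ` over `K(X)` is `φ(u) / b²` for a vector `u` of polynomials. If `f` is a product of
such values, comparing `f`-adic valuations shows that some `φ(u)` has odd valuation; after dividing
`u` by its content, `f ∣ φ(u)` while `u` is nonzero modulo `f`, so its reduction is an isotropic
vector over `K(f)`.

Conversely, an isotropic vector over `K(f)` lifts to a primitive vector `v` of polynomials of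
degree `< deg f` with `φ(v) = f g`. Since `φ` is anisotropic, `φ(v)` has degree `2 max deg vᵢ` and
its leading coefficient is a value of `φ`; hence `deg g ≤ deg f - 2` and `lc g ∈ D(φ)`. Every monic
irreducible factor `q` of `g` divides `φ(v)` with `v` primitive, so `φ` is isotropic over `K(q)`,
and by induction on the degree `q` is a product of at most `deg q` values. Then
`f = φ(v / g) · lc g · ∏ q` is a product of at most `2 + deg g ≤ deg f` values.
-/

open scoped TensorProduct

noncomputable section

/-- Nonzero values represented by a quadratic form, as a subset of the field. -/
def Dv {K V : Type*} [Field K] [AddCommGroup V] [Module K V]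
    (Q : QuadraticForm K V) : Set K :=
  {a | a ≠ 0 ∧ ∃ v, Q v = a}

/-- Values represented by a quadratic form, as a set of units. -/
def Dunits {K V : Type*} [Field K] [AddCommGroup V] [Module K V]
    (Q : QuadraticForm K V) : Set Kˣ :=
  {u | ∃ v, Q v = (u : K)}

/-- `T_K(Q)`: the subgroup of `Kˣ` generated by the values represented by `Q`. -/
def Tgrp {K V : Type*} [Field K] [AddCommGroup V] [Module K V]
    (Q : QuadraticForm K V) : Subgroup Kˣ :=
  Subgroup.closure (Dunits Q)

/-- `N_K(Q)`: the subgroup of `Kˣ` generated by products of two represented values. -/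
def Ngrp {K V : Type*} [Field K] [AddCommGroup V] [Module K V]
    (Q : QuadraticForm K V) : Subgroup Kˣ :=
  Subgroup.closure {u : Kˣ | ∃ a b : Kˣ, a ∈ Dunits Q ∧ b ∈ Dunits Q ∧ u = a * b}

/-- Products of exactly `m` values represented by `Q`. -/
def Dpow {K V : Type*} [Field K] [AddCommGroup V] [Module K V]
    (Q : QuadraticForm K V) (m : ℕ) : Set K :=
  {x | ∃ c : Fin m → K, (∀ i, c i ∈ Dv Q) ∧ x = ∏ i, c i}

/-- Isotropy of (the scalar extension of) `Q` over a commutative `K`-algebra `F`. -/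
def IsotropicOver {K V : Type*} [Field K] [Invertible (2 : K)] [AddCommGroup V] [Module K V]
    (Q : QuadraticForm K V) (F : Type*) [CommRing F] [Algebra K F] : Prop :=
  ∃ w : F ⊗[K] V, w ≠ 0 ∧ Q.baseChange F w = 0

/-- The polynomial obtained by evaluating `Q` at the generic point in the basis `b`. -/
def genPoly {K V ι : Type*} [Field K] [Invertible (2 : K)] [AddCommGroup V] [Module K V]
    [Fintype ι] (b : Module.Basis ι K V) (Q : QuadraticForm K V) : MvPolynomial ι K :=
  Q.baseChange (MvPolynomial ι K) (∑ i, MvPolynomial.X i ⊗ₜ[K] b i)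

/-- The affine coordinate ring of the quadric `Q = 0` (in the coordinates given by `b`). -/
abbrev CoordRing {K V ι : Type*} [Field K] [Invertible (2 : K)] [AddCommGroup V] [Module K V]
    [Fintype ι] (b : Module.Basis ι K V) (Q : QuadraticForm K V) : Type _ :=
  MvPolynomial ι K ⧸ Ideal.span {genPoly b Q}

/-- The function field `K(Q)` of the quadric `Q = 0`. -/
abbrev FunctionFieldQF {K V ι : Type*} [Field K] [Invertible (2 : K)] [AddCommGroup V]
    [Module K V] [Fintype ι] (b : Module.Basis ι K V) (Q : QuadraticForm K V) : Type _ :=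
  FractionRing (CoordRing b Q)

open Polynomial TensorProduct

section DpowLe

variable {L W : Type*} [Field L] [AddCommGroup W] [Module L W] (Q : QuadraticForm L W)

def DpowLe (m : ℕ) : Set L := {x | ∃ k ≤ m, x ∈ Dpow Q k}

variable {Q}

theorem DpowLe_mono {m m' : ℕ} (h : m ≤ m') : DpowLe Q m ⊆ DpowLe Q m' :=
  fun _ ⟨k, hk, hx⟩ => ⟨k, hk.trans h, hx⟩

theorem one_mem_DpowLe : (1 : L) ∈ DpowLe Q 0 :=
  ⟨0, le_rfl, fun i => i.elim0, fun i => i.elim0, by simp⟩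

theorem mem_DpowLe_one_of_mem_Dv {x : L} (hx : x ∈ Dv Q) : x ∈ DpowLe Q 1 :=
  ⟨1, le_rfl, fun _ => x, fun _ => hx, by simp⟩

theorem mul_mem_Dpow {x y : L} {k l : ℕ} (hx : x ∈ Dpow Q k) (hy : y ∈ Dpow Q l) :
    x * y ∈ Dpow Q (k + l) := by
  obtain ⟨c, hc, rfl⟩ := hx
  obtain ⟨d, hd, rfl⟩ := hy
  refine ⟨Fin.append c d, Fin.addCases (by simpa using hc) (by simpa using hd), ?_⟩
  simp [Fin.prod_univ_add]

theorem mul_mem_DpowLe {x y : L} {m m' : ℕ} (hx : x ∈ DpowLe Q m) (hy : y ∈ DpowLe Q m') :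
    x * y ∈ DpowLe Q (m + m') := by
  obtain ⟨k, hk, hx⟩ := hx
  obtain ⟨l, hl, hy⟩ := hy
  exact ⟨k + l, add_le_add hk hl, mul_mem_Dpow hx hy⟩

theorem multiset_prod_mem_DpowLe {ι : Type*} (S : Multiset ι) (x : ι → L) (w : ι → ℕ)
    (h : ∀ i ∈ S, x i ∈ DpowLe Q (w i)) : (S.map x).prod ∈ DpowLe Q (S.map w).sum := by
  induction S using Multiset.induction_on with
  | empty => simpa using one_mem_DpowLe
  | cons i S ih =>
    simpa using mul_mem_DpowLe (h i (S.mem_cons_self i))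
      (ih fun j hj => h j (Multiset.mem_cons_of_mem hj))

end DpowLe

theorem sq_mul_mem_Dv {L W : Type*} [Field L] [AddCommGroup W] [Module L W]
    {Q : QuadraticForm L W} {x s : L} (hx : x ∈ Dv Q) (hs : s ≠ 0) : s ^ 2 * x ∈ Dv Q := by
  obtain ⟨hx0, w, rfl⟩ := hx
  exact ⟨mul_ne_zero (pow_ne_zero 2 hs) hx0, s • w, by rw [QuadraticMap.map_smul, sq, smul_eq_mul]⟩

theorem Polynomial.Monic.algebraMap_mem_DpowLe {K L W : Type*} [Field K] [Field L]
    [AddCommGroup W] [Module L W] {Q : QuadraticForm L W} [Algebra K[X] L] {g : K[X]} (hg : g.Monic)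
    (hfac : ∀ q : K[X], q.Monic → Irreducible q → q ∣ g →
      algebraMap K[X] L q ∈ DpowLe Q q.natDegree) :
    algebraMap K[X] L g ∈ DpowLe Q g.natDegree := by
  classical
  have hmonic (q) (hq : q ∈ UniqueFactorizationMonoid.normalizedFactors g) : q.Monic :=
    UniqueFactorizationMonoid.normalize_normalized_factor q hq ▸
      monic_normalize (UniqueFactorizationMonoid.irreducible_of_normalized_factor q hq).ne_zero
  have hprod : (UniqueFactorizationMonoid.normalizedFactors g).prod = g := by
    rw [UniqueFactorizationMonoid.prod_normalizedFactors_eq hg.ne_zero, hg.normalize_eq_self]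
  rw [← hprod, natDegree_multiset_prod_of_monic _ hmonic, map_multiset_prod]
  exact multiset_prod_mem_DpowLe _ _ _ fun q hq => hfac q (hmonic q hq)
    (UniqueFactorizationMonoid.irreducible_of_normalized_factor q hq)
    (UniqueFactorizationMonoid.dvd_of_mem_normalizedFactors hq)

theorem exists_eq_smul_primitive {ι α : Type*} [Fintype ι] [CommMonoidWithZero α]
    [NormalizedGCDMonoid α] {u : ι → α} (hu : u ≠ 0) :
    ∃ g : α, g ≠ 0 ∧ ∃ v : ι → α, u = g • v ∧ ∀ q, (∀ i, q ∣ v i) → IsUnit q := by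
  obtain ⟨j, hj⟩ := Function.ne_iff.1 hu
  obtain ⟨v, hv, hv1⟩ := Finset.univ.extract_gcd u ⟨j, Finset.mem_univ j⟩
  refine ⟨_, fun h => hj (Finset.gcd_eq_zero_iff.1 h j (Finset.mem_univ j)),
    v, funext fun i => hv i (Finset.mem_univ i), fun q hq => ?_⟩
  exact isUnit_of_dvd_one (hv1 ▸ Finset.dvd_gcd fun i _ => hq i)

-- `multiplicity p 0 = 1` is odd, hence the conjunct `x i ≠ 0`.
theorem exists_odd_multiplicity_of_prod_eq_sq_mul {ι α : Type*} [CommMonoidWithZero α]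
    [IsCancelMulZero α] [WfDvdMonoid α] {p : α} (hp : Prime p) {s : Finset ι} {x : ι → α}
    {b : α} (hb : b ≠ 0) (h : ∏ i ∈ s, x i = b ^ 2 * p) :
    ∃ i ∈ s, x i ≠ 0 ∧ Odd (multiplicity p (x i)) := by
  have : Nontrivial α := ⟨⟨p, 0, hp.ne_zero⟩⟩
  have hfin {y : α} (hy : y ≠ 0) : FiniteMultiplicity p y := .of_not_isUnit hp.not_isUnit hy
  have hprod : b ^ 2 * p ≠ 0 := mul_ne_zero (pow_ne_zero 2 hb) hp.ne_zero
  have hx (i) (hi : i ∈ s) : x i ≠ 0 := Finset.prod_ne_zero_iff.1 (h ▸ hprod) i hi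
  have hsum : ∑ i ∈ s, multiplicity p (x i) = 2 * multiplicity p b + 1 := by
    have := Finset.emultiplicity_prod hp s x
    rw [h, emultiplicity_mul hp, emultiplicity_pow hp, (hfin hp.ne_zero).emultiplicity_self,
      (hfin hb).emultiplicity_eq_multiplicity,
      Finset.sum_congr rfl fun i hi => (hfin (hx i hi)).emultiplicity_eq_multiplicity] at this
    exact_mod_cast this.symm
  by_contra! hev
  have : Even (∑ i ∈ s, multiplicity p (x i)) :=
    Finset.even_sum _ fun i hi => Nat.not_odd_iff_even.1 (hev i hi (hx i hi))
  rw [hsum] at this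
  exact Nat.not_even_two_mul_add_one _ this

theorem Polynomial.exists_coeff_sup_natDegree_ne_zero {ι R : Type*} [Fintype ι] [Semiring R]
    {u : ι → R[X]} (hu : u ≠ 0) :
    ∃ i, (u i).coeff (Finset.univ.sup fun i => (u i).natDegree) ≠ 0 := by
  obtain ⟨j, hj⟩ := Function.ne_iff.1 hu
  obtain ⟨i, -, hi⟩ := Finset.exists_mem_eq_sup Finset.univ ⟨j, Finset.mem_univ j⟩
    fun i => (u i).natDegree
  by_cases hi0 : u i = 0
  · have hsup : (Finset.univ.sup fun i => (u i).natDegree) = 0 := by rw [hi, hi0, natDegree_zero]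
    have hjd : (u j).natDegree = Finset.univ.sup fun i => (u i).natDegree :=
      (Finset.le_sup (f := fun i => (u i).natDegree) (Finset.mem_univ j)).antisymm
        (hsup ▸ Nat.zero_le _)
    exact ⟨j, by rw [← hjd]; exact leadingCoeff_ne_zero.2 hj⟩
  · exact ⟨i, by rw [hi]; exact leadingCoeff_ne_zero.2 hi0⟩

theorem TensorProduct.piScalarRight_symm_eq_sum {R S N ι : Type*} [CommSemiring R]
    [CommSemiring S] [Algebra R S] [AddCommMonoid N] [Module R N] [Module S N]
    [IsScalarTower R S N] [Fintype ι] [DecidableEq ι] (x : ι → N) :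
    (piScalarRight R S N ι).symm x = ∑ i, x i ⊗ₜ[R] (Pi.single i 1 : ι → R) := by
  conv_lhs => rw [← Finset.univ_sum_single x]
  simp only [map_sum, piScalarRight_symm_single]

namespace QuadraticForm

variable {K : Type*} [Field K] [Invertible (2 : K)] {n : ℕ} (φ : QuadraticForm K (Fin n → K))
  {A : Type*} [CommRing A] [Algebra K A] {F : Type*} [Field F] [Algebra K F]

variable (A) in
def evalCoords (a : Fin n → A) : A :=
  ∑ i, ∑ j, a i * a j * algebraMap K A (QuadraticMap.associated φ (Pi.single i 1) (Pi.single j 1))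

theorem baseChange_piScalarRight_symm (a : Fin n → A) :
    φ.baseChange A ((piScalarRight K A A (Fin n)).symm a) = φ.evalCoords A a := by
  let : Invertible (2 : A) := (Invertible.map (algebraMap K A) 2).copy 2 (map_ofNat _ _).symm
  rw [← QuadraticMap.associated_eq_self_apply A, associated_baseChange,
    piScalarRight_symm_eq_sum, evalCoords]
  simp only [map_sum, LinearMap.sum_apply, LinearMap.BilinForm.baseChange_tmul,
    Algebra.smul_def]
  rw [Finset.sum_comm]
  exact Finset.sum_congr rfl fun i _ => Finset.sum_congr rfl fun j _ => by ring

theorem evalCoords_self (v : Fin n → K) : φ.evalCoords K v = φ v := by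
  conv_rhs => rw [← Finset.univ_sum_single v, ← QuadraticMap.associated_eq_self_apply K φ]
  have hsingle (i : Fin n) : Pi.single i (v i) = v i • (Pi.single i 1 : Fin n → K) := by
    rw [← Pi.single_smul, smul_eq_mul, mul_one]
  simp only [evalCoords, map_sum, LinearMap.sum_apply, hsingle, map_smul, LinearMap.smul_apply,
    smul_eq_mul, Algebra.algebraMap_self, RingHom.id_apply, Finset.mul_sum]
  rw [Finset.sum_comm]
  exact Finset.sum_congr rfl fun i _ => Finset.sum_congr rfl fun j _ => by ring

theorem evalCoords_map {B : Type*} [CommRing B] [Algebra K B] (ρ : A →ₐ[K] B) (a : Fin n → A) :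
    φ.evalCoords B (ρ ∘ a) = ρ (φ.evalCoords A a) := by
  simp only [evalCoords, Function.comp_apply, map_sum, map_mul, AlgHom.commutes]

theorem evalCoords_smul (c : A) (a : Fin n → A) :
    φ.evalCoords A (c • a) = c ^ 2 * φ.evalCoords A a := by
  simp only [evalCoords, Pi.smul_apply, smul_eq_mul, Finset.mul_sum]
  refine Finset.sum_congr rfl fun i _ => Finset.sum_congr rfl fun j _ => by ring

theorem isotropicOver_iff_exists_evalCoords :
    IsotropicOver φ A ↔ ∃ a : Fin n → A, a ≠ 0 ∧ φ.evalCoords A a = 0 := by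
  let e := (piScalarRight K A A (Fin n)).symm
  constructor
  · rintro ⟨w, hw, hφw⟩
    refine ⟨e.symm w, by simpa using hw, ?_⟩
    rwa [← baseChange_piScalarRight_symm, LinearEquiv.apply_symm_apply]
  · rintro ⟨a, ha, hφa⟩
    exact ⟨e a, by simpa [e] using ha, by rwa [baseChange_piScalarRight_symm]⟩

theorem mem_Dv_baseChange_iff {x : F} :
    x ∈ Dv (φ.baseChange F) ↔ x ≠ 0 ∧ ∃ a : Fin n → F, φ.evalCoords F a = x := by
  refine and_congr_right fun _ => ⟨?_, ?_⟩
  · rintro ⟨w, rfl⟩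
    exact ⟨piScalarRight K F F (Fin n) w, by rw [← baseChange_piScalarRight_symm,
      LinearEquiv.symm_apply_apply]⟩
  · rintro ⟨a, rfl⟩
    exact ⟨_, baseChange_piScalarRight_symm φ a⟩

theorem algebraMap_mem_Dv_baseChange {c : K} (hc : c ∈ Dv φ) :
    algebraMap K F c ∈ Dv (φ.baseChange F) := by
  obtain ⟨hc0, v, rfl⟩ := hc
  refine (mem_Dv_baseChange_iff φ).2 ⟨(_root_.map_ne_zero _).2 hc0, algebraMap K F ∘ v, ?_⟩
  rw [← evalCoords_self]
  exact evalCoords_map φ (Algebra.ofId K F) v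

theorem algebraMap_evalCoords_mem_Dv {R : Type*} [CommRing R] [Algebra K R] [Algebra R F]
    [IsScalarTower K R F] {u : Fin n → R} (hu : algebraMap R F (φ.evalCoords R u) ≠ 0) :
    algebraMap R F (φ.evalCoords R u) ∈ Dv (φ.baseChange F) :=
  (mem_Dv_baseChange_iff φ).2 ⟨hu, _, evalCoords_map φ (IsScalarTower.toAlgHom K R F) u⟩

theorem coeff_evalCoords_two_mul {u : Fin n → K[X]} {d : ℕ} (hd : ∀ i, (u i).natDegree ≤ d) :
    (φ.evalCoords K[X] u).coeff (2 * d) = φ fun i => (u i).coeff d := by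
  rw [← evalCoords_self, evalCoords, evalCoords]
  simp only [finsetSum_coeff, Polynomial.algebraMap_eq, coeff_mul_C, two_mul,
    coeff_mul_add_eq_of_natDegree_le (hd _) (hd _), Algebra.algebraMap_self, RingHom.id_apply]

theorem natDegree_evalCoords_le {u : Fin n → K[X]} {d : ℕ} (hd : ∀ i, (u i).natDegree ≤ d) :
    (φ.evalCoords K[X] u).natDegree ≤ 2 * d := by
  refine natDegree_sum_le_of_forall_le _ _ fun i _ =>
    natDegree_sum_le_of_forall_le _ _ fun j _ => ?_
  rw [Polynomial.algebraMap_eq, two_mul]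
  exact (natDegree_mul_C_le _ _).trans (natDegree_mul_le_of_le (hd i) (hd j))

theorem natDegree_evalCoords_and_leadingCoeff_mem_Dv (haniso : φ.Anisotropic)
    {u : Fin n → K[X]} (hu : u ≠ 0) :
    (φ.evalCoords K[X] u).natDegree = 2 * (Finset.univ.sup fun i => (u i).natDegree) ∧
      (φ.evalCoords K[X] u).leadingCoeff ∈ Dv φ := by
  set d := Finset.univ.sup fun i => (u i).natDegree
  have hd (i : Fin n) : (u i).natDegree ≤ d :=
    Finset.le_sup (f := fun i => (u i).natDegree) (Finset.mem_univ i)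
  have htop : φ (fun i => (u i).coeff d) ≠ 0 := fun h => by
    obtain ⟨i, hi⟩ := exists_coeff_sup_natDegree_ne_zero hu
    exact hi (congrFun (haniso _ h) i)
  have hdeg : (φ.evalCoords K[X] u).natDegree = 2 * d :=
    (natDegree_evalCoords_le φ hd).antisymm
      (le_natDegree_of_ne_zero (by rwa [coeff_evalCoords_two_mul φ hd]))
  refine ⟨hdeg, ?_⟩
  rw [leadingCoeff, hdeg, coeff_evalCoords_two_mul φ hd]
  exact ⟨htop, _, rfl⟩

theorem evalCoords_adjoinRoot_mk (f : K[X]) (v : Fin n → K[X]) :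
    φ.evalCoords (AdjoinRoot f) (AdjoinRoot.mk f ∘ v) = AdjoinRoot.mk f (φ.evalCoords K[X] v) :=
  evalCoords_map φ (AdjoinRoot.mkₐ f) v

theorem isotropicOver_adjoinRoot_of_dvd {f : K[X]} (hf : ¬IsUnit f) {v : Fin n → K[X]}
    (hv : ∀ q, (∀ i, q ∣ v i) → IsUnit q) (hdvd : f ∣ φ.evalCoords K[X] v) :
    IsotropicOver φ (AdjoinRoot f) := by
  refine (isotropicOver_iff_exists_evalCoords φ).2 ⟨AdjoinRoot.mk f ∘ v, fun h => hf ?_, ?_⟩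
  · exact hv f fun i => AdjoinRoot.mk_eq_zero.1 (congrFun h i)
  · rw [evalCoords_adjoinRoot_mk, AdjoinRoot.mk_eq_zero]
    exact hdvd

theorem exists_primitive_lift_of_isotropicOver {f : K[X]} (hmonic : f.Monic) (hf : Irreducible f)
    (h : IsotropicOver φ (AdjoinRoot f)) :
    ∃ v : Fin n → K[X], (∀ q, (∀ i, q ∣ v i) → IsUnit q) ∧ (∀ i, (v i).natDegree < f.natDegree) ∧
      f ∣ φ.evalCoords K[X] v := by
  obtain ⟨a, ha, hφa⟩ := (isotropicOver_iff_exists_evalCoords φ).1 h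
  set u : Fin n → K[X] := AdjoinRoot.modByMonicHom hmonic ∘ a
  have hua : AdjoinRoot.mk f ∘ u = a := funext fun i => AdjoinRoot.mk_leftInverse hmonic (a i)
  have hu : u ≠ 0 := by rintro hu; exact ha (by rw [← hua, hu]; rfl)
  classical
  obtain ⟨g, hg, v, huv, hv⟩ := exists_eq_smul_primitive hu
  have hfg : ¬f ∣ g := fun hfg => ha <| by
    rw [← hua, huv]
    exact funext fun i => AdjoinRoot.mk_eq_zero.2 (hfg.mul_right _)
  have hfu : f ∣ g ^ 2 * φ.evalCoords K[X] v := by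
    rw [← evalCoords_smul, ← huv, ← AdjoinRoot.mk_eq_zero, ← evalCoords_adjoinRoot_mk, hua, hφa]
  refine ⟨v, hv, fun i => ?_, ((hf.prime.dvd_mul.1 hfu).resolve_left
    fun h => hfg (hf.prime.dvd_of_dvd_pow h))⟩
  by_cases hvi : v i = 0
  · rw [hvi, natDegree_zero]
    exact hf.natDegree_pos
  · calc (v i).natDegree ≤ (u i).natDegree := by
          rw [huv, Pi.smul_apply, smul_eq_mul, natDegree_mul hg hvi]
          omega
      _ < f.natDegree := by
          obtain ⟨p, hp⟩ := AdjoinRoot.mk_surjective (a i)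
          have hui : u i = p %ₘ f := by
            simp only [u, Function.comp_apply, ← hp, AdjoinRoot.modByMonicHom_mk]
          rw [hui]
          exact natDegree_modByMonic_lt p hmonic (hf.not_isUnit <| · ▸ isUnit_one)

theorem isotropicOver_adjoinRoot_of_odd_multiplicity {f : K[X]} (hf : Irreducible f)
    {u : Fin n → K[X]} (hu : φ.evalCoords K[X] u ≠ 0)
    (hodd : Odd (multiplicity f (φ.evalCoords K[X] u))) : IsotropicOver φ (AdjoinRoot f) := by
  classical
  obtain ⟨g, hg, v, rfl, hv⟩ :=
    exists_eq_smul_primitive fun h : u = 0 => hu (by simp [h, evalCoords])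
  rw [evalCoords_smul] at hu hodd
  rw [multiplicity_mul hf.prime (.of_not_isUnit hf.not_isUnit hu),
    (FiniteMultiplicity.of_not_isUnit hf.not_isUnit hg).multiplicity_pow hf.prime] at hodd
  refine isotropicOver_adjoinRoot_of_dvd φ hf.not_isUnit hv (by_contra fun h => ?_)
  rw [← multiplicity_eq_zero] at h
  rw [h, add_zero] at hodd
  exact Nat.not_odd_iff_even.2 (even_two_mul _) hodd

theorem exists_evalCoords_eq_sq_mul {R : Type*} [CommRing R] [IsDomain R] [Algebra K R]
    [Algebra R F] [IsScalarTower K R F] [IsFractionRing R F] {c : F}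
    (hc : c ∈ Dv (φ.baseChange F)) :
    ∃ b : R, b ≠ 0 ∧ ∃ u : Fin n → R,
      algebraMap R F (φ.evalCoords R u) = algebraMap R F b ^ 2 * c := by
  obtain ⟨-, w, rfl⟩ := (mem_Dv_baseChange_iff φ).1 hc
  obtain ⟨b, hb⟩ := IsLocalization.exist_integer_multiples (nonZeroDivisors R) Finset.univ w
  choose u hu using fun i => hb i (Finset.mem_univ i)
  refine ⟨b, nonZeroDivisors.ne_zero b.2, u, ?_⟩
  have hwu : (algebraMap R F ∘ u) = algebraMap R F b • w := by
    ext i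
    rw [Function.comp_apply, hu i, Pi.smul_apply, Algebra.smul_def, smul_eq_mul]
  rw [← evalCoords_smul, ← hwu]
  exact (evalCoords_map φ (IsScalarTower.toAlgHom K R F) u).symm

theorem isotropicOver_adjoinRoot_of_mem_Dpow {f : K[X]} (hf : Irreducible f) {k : ℕ}
    (h : algebraMap K[X] (FractionRing K[X]) f ∈ Dpow (φ.baseChange (FractionRing K[X])) k) :
    IsotropicOver φ (AdjoinRoot f) := by
  obtain ⟨c, hc, hcf⟩ := h
  choose b hb u hu using fun i => exists_evalCoords_eq_sq_mul (R := K[X]) φ (hc i)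
  have hprod : ∏ i, φ.evalCoords K[X] (u i) = (∏ i, b i) ^ 2 * f := by
    apply IsFractionRing.injective K[X] (FractionRing K[X])
    simp only [map_prod, map_mul, map_pow, hu, hcf, Finset.prod_mul_distrib, Finset.prod_pow]
  obtain ⟨i, -, hi0, hodd⟩ := exists_odd_multiplicity_of_prod_eq_sq_mul hf.prime
    (Finset.prod_ne_zero_iff.2 fun i _ => hb i) hprod
  exact isotropicOver_adjoinRoot_of_odd_multiplicity φ hf hi0 hodd

theorem algebraMap_mem_DpowLe_of_mul_eq_evalCoords {R : Type*} [CommRing R] [IsDomain R]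
    [Algebra K R] [Algebra R F] [IsScalarTower K R F] [IsFractionRing R F] {f g : R}
    {v : Fin n → R} {m : ℕ} (hfg : φ.evalCoords R v = f * g) (hE : φ.evalCoords R v ≠ 0)
    (hg : algebraMap R F g ∈ DpowLe (φ.baseChange F) m) :
    algebraMap R F f ∈ DpowLe (φ.baseChange F) (m + 1) := by
  have hinj := IsFractionRing.injective R F
  have hgF : algebraMap R F g ≠ 0 :=
    (map_ne_zero_iff _ hinj).2 (right_ne_zero_of_mul (hfg ▸ hE))
  have hquot : (algebraMap R F g)⁻¹ ^ 2 * algebraMap R F (φ.evalCoords R v) ∈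
      Dv (φ.baseChange F) :=
    sq_mul_mem_Dv (algebraMap_evalCoords_mem_Dv φ ((map_ne_zero_iff _ hinj).2 hE))
      (inv_ne_zero hgF)
  have hfF : algebraMap R F f =
      algebraMap R F g * ((algebraMap R F g)⁻¹ ^ 2 * algebraMap R F (φ.evalCoords R v)) := by
    rw [hfg, map_mul]
    field_simp
  rw [hfF]
  exact mul_mem_DpowLe hg (mem_DpowLe_one_of_mem_Dv hquot)

section Forward

variable [Algebra K[X] F] [IsScalarTower K K[X] F]

theorem algebraMap_mem_DpowLe_of_leadingCoeff_mem_Dv {g : K[X]} (hg : g ≠ 0)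
    (hlc : g.leadingCoeff ∈ Dv φ)
    (hfac : ∀ q : K[X], q.Monic → Irreducible q → q ∣ g →
      algebraMap K[X] F q ∈ DpowLe (φ.baseChange F) q.natDegree) :
    algebraMap K[X] F g ∈ DpowLe (φ.baseChange F) (g.natDegree + 1) := by
  set c := g.leadingCoeff
  have hc : c ≠ 0 := leadingCoeff_ne_zero.2 hg
  set m := g * C c⁻¹ with hm
  have hgm : g = m * C c := by rw [hm, mul_assoc, ← C_mul, inv_mul_cancel₀ hc, C_1, mul_one]
  have hmg : m ∣ g := hgm ▸ dvd_mul_right m (C c)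
  rw [hgm, natDegree_mul_C hc, map_mul, ← Polynomial.algebraMap_eq,
    ← IsScalarTower.algebraMap_apply]
  exact mul_mem_DpowLe
    ((monic_mul_leadingCoeff_inv hg).algebraMap_mem_DpowLe fun q hq hqi hqm =>
      hfac q hq hqi (hqm.trans hmg))
    (mem_DpowLe_one_of_mem_Dv (algebraMap_mem_Dv_baseChange φ hlc))

variable [IsFractionRing K[X] F]

theorem algebraMap_mem_DpowLe_of_isotropicOver (haniso : φ.Anisotropic) {f : K[X]}
    (hmonic : f.Monic) (hf : Irreducible f) (hiso : IsotropicOver φ (AdjoinRoot f)) :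
    algebraMap K[X] F f ∈ DpowLe (φ.baseChange F) f.natDegree := by
  induction hN : f.natDegree using Nat.strong_induction_on generalizing f with
  | _ N IH =>
  subst hN
  obtain ⟨v, hv, hvdeg, g, hfg⟩ := exists_primitive_lift_of_isotropicOver φ hmonic hf hiso
  have hv0 : v ≠ 0 := fun h => not_isUnit_zero (hv 0 fun i => by simp [h])
  obtain ⟨hdeg, hlc⟩ := natDegree_evalCoords_and_leadingCoeff_mem_Dv φ haniso hv0
  have hE : φ.evalCoords K[X] v ≠ 0 := leadingCoeff_ne_zero.1 hlc.1
  have hg : g ≠ 0 := by rintro rfl; exact hE (by rw [hfg, mul_zero])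
  have hsup : (Finset.univ.sup fun i => (v i).natDegree) < f.natDegree :=
    (Finset.sup_lt_iff hf.natDegree_pos).2 fun i _ => hvdeg i
  have hgdeg : g.natDegree + 2 ≤ f.natDegree := by
    rw [hfg, natDegree_mul hmonic.ne_zero hg] at hdeg
    omega
  have hglc : g.leadingCoeff ∈ Dv φ := by
    rwa [hfg, leadingCoeff_mul, hmonic.leadingCoeff, one_mul] at hlc
  have hgmem : algebraMap K[X] F g ∈ DpowLe (φ.baseChange F) (g.natDegree + 1) :=
    algebraMap_mem_DpowLe_of_leadingCoeff_mem_Dv φ hg hglc fun q hq hqi hqg =>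
      IH _ (by have := natDegree_le_of_dvd hqg hg; omega) hq hqi
        (isotropicOver_adjoinRoot_of_dvd φ hqi.not_isUnit hv
          (hqg.trans (hfg ▸ dvd_mul_left g f))) rfl
  exact DpowLe_mono (by omega) (algebraMap_mem_DpowLe_of_mul_eq_evalCoords φ hfg hE hgmem)

end Forward

end QuadraticForm

theorem stmt_8_general {K : Type*} [Field K] [Invertible (2 : K)] {n : ℕ}
    (φ : QuadraticForm K (Fin n → K)) (haniso : φ.Anisotropic)
    (f : Polynomial K) (hmonic : f.Monic) (hf : Irreducible f) :
    IsotropicOver φ (AdjoinRoot f) ↔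
      ∃ k ≤ f.natDegree,
        algebraMap (Polynomial K) (FractionRing (Polynomial K)) f ∈
          Dpow (φ.baseChange (FractionRing (Polynomial K))) k :=
  ⟨φ.algebraMap_mem_DpowLe_of_isotropicOver haniso hmonic hf,
    fun ⟨_, _, h⟩ => φ.isotropicOver_adjoinRoot_of_mem_Dpow hf h⟩

/-- for anisotropic `φ` representing 1 and monic irreducible `f ∈ K[X]`,
`φ` is isotropic over `K(f) = K[X]/(f)` iff `f` is a product of at most `deg f`
values of `φ` over `K(X)`. -/
theorem stmt_8 {K : Type*} [Field K] [Invertible (2 : K)] {n : ℕ}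
    (φ : QuadraticForm K (Fin n → K)) (haniso : φ.Anisotropic)
    (hone : ∃ v, φ v = 1)
    (f : Polynomial K) (hmonic : f.Monic) (hf : Irreducible f) :
    IsotropicOver φ (AdjoinRoot f) ↔
      ∃ k ≤ f.natDegree,
        algebraMap (Polynomial K) (FractionRing (Polynomial K)) f ∈
          Dpow (φ.baseChange (FractionRing (Polynomial K))) k :=
  stmt_8_general φ haniso f hmonic hf

end
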